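/- arXiv:2602.01168 — 3 statements merged into one kernel-verified Lean document; each statement's English description precedes it below -/
import Mathlib

section
/- Let $\mathcal{J}:\mathbb{R}_+^k\to[0,\infty)$ be lower semicontinuous, componentwise nondecreasing, and positively $\alpha$-homogeneous for some $\alpha\in(0,1)$. Define $\mathcal{I}_\mathcal{J}(\bt):=\min\{\sum_{r=1}^k\mathcal{J}(\bt^{(r)}): \bt^{(r)}\in\mathbb{R}_+^k,\ \sum_{r=1}^k\bt^{(r)}=\bt\}$. Then for every $\bt\in\mathbb{R}_+^k$, $\mathcal{I}_\mathcal{J}(\bt) = \min_{m\in\mathbb{N}}\inf\{\sum_{r=1}^m\mathcal{J}(\bt^{(r)}): \bt^{(r)}\in\mathbb{R}_+^k,\ \sum_{r=1}^m\bt^{(r)}\ge\bt\}$; i.e., allowing arbitrarily many summands and only a componentwise inequality constraint does not decrease the infimum below the value achieved with exactly $k$ summands summing exactly to $\bt$. -/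
/-!
A decomposition of `t` whose sum only dominates `t` can be shrunk coordinatewise to one summing
exactly to `t`, at no extra cost since `J` is monotone. If such a decomposition has more summands
than the dimension `k`, a linear relation `∑ c_r x_r = 0` yields the line of decompositions
`x_r ↦ (1 + e c_r) x_r` of `t`, whose cost `∑ (1 + e c_r)^α J(x_r)` is concave in `e` because
`α ≤ 1`. Its minimum over the admissible interval is therefore attained at an endpoint, where some
summand vanishes and can be dropped. Iterating leaves `k` summands; conversely, padding with zero
summands costs nothing, as homogeneity forces `J 0 = 0`.
-/

open Finset

section RealFamilies

variable {ι : Type*} [Fintype ι] {α : ℝ} {c w : ι → ℝ}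

lemma exists_neg_one_add_mul_boundary (hc : ∃ r, 0 < c r) :
    ∃ e < 0, (∀ r, 0 ≤ 1 + e * c r) ∧ ∃ r, 1 + e * c r = 0 := by
  obtain ⟨r₀, hr₀⟩ := hc
  have : Nonempty ι := ⟨r₀⟩
  obtain ⟨s, hs⟩ := Finite.exists_max c
  have hpos : 0 < c s := hr₀.trans_le (hs r₀)
  refine ⟨-(c s)⁻¹, by simpa using hpos, fun r => ?_, s, by field_simp; ring⟩
  have := (div_le_one hpos).2 (hs r)
  rw [div_eq_inv_mul] at this
  linarith

lemma exists_pos_one_add_mul_boundary (hc : ∃ r, c r < 0) :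
    ∃ e > 0, (∀ r, 0 ≤ 1 + e * c r) ∧ ∃ r, 1 + e * c r = 0 := by
  obtain ⟨e, he, hS, r, hr⟩ := exists_neg_one_add_mul_boundary (c := fun r => -c r)
    (by simpa using hc)
  exact ⟨-e, by linarith, fun r => by linarith [hS r], r, by linarith⟩

lemma min_sum_one_add_mul_rpow_mul_le (hα0 : 0 ≤ α) (hα1 : α ≤ 1) (hw : ∀ r, 0 ≤ w r)
    {a b : ℝ} (ha : a < 0) (hb : 0 < b) (haS : ∀ r, 0 ≤ 1 + a * c r)
    (hbS : ∀ r, 0 ≤ 1 + b * c r) :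
    min (∑ r, (1 + a * c r) ^ α * w r) (∑ r, (1 + b * c r) ^ α * w r) ≤ ∑ r, w r := by
  have hba : 0 < b - a := by linarith
  obtain ⟨la, lb, hla, hlb, hlab, hab⟩ :
      ∃ la lb : ℝ, 0 ≤ la ∧ 0 ≤ lb ∧ la + lb = 1 ∧ la * a + lb * b = 0 :=
    ⟨b / (b - a), -a / (b - a), by positivity, div_nonneg (by linarith) hba.le,
      by field_simp; ring, by field_simp; ring⟩
  have hterm : ∀ r, la * (1 + a * c r) ^ α + lb * (1 + b * c r) ^ α ≤ 1 := fun r => by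
    have hcomb : la * (1 + a * c r) + lb * (1 + b * c r) = 1 := by
      linear_combination hlab + c r * hab
    simpa [hcomb] using (Real.concaveOn_rpow hα0 hα1).2 (haS r) (hbS r) hla hlb hlab
  have hsum : la * ∑ r, (1 + a * c r) ^ α * w r + lb * ∑ r, (1 + b * c r) ^ α * w r
      ≤ ∑ r, w r := by
    rw [mul_sum, mul_sum, ← sum_add_distrib]
    refine sum_le_sum fun r _ => ?_
    linear_combination mul_le_mul_of_nonneg_right (hterm r) (hw r)
  rcases le_total (∑ r, (1 + a * c r) ^ α * w r) (∑ r, (1 + b * c r) ^ α * w r) with h | h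
  · rw [min_eq_left h]
    linear_combination hsum + mul_le_mul_of_nonneg_left h hlb
      - (∑ r, (1 + a * c r) ^ α * w r) * hlab
  · rw [min_eq_right h]
    linear_combination hsum + mul_le_mul_of_nonneg_left h hla
      - (∑ r, (1 + b * c r) ^ α * w r) * hlab

lemma exists_boundary_sum_one_add_mul_rpow_mul_le (hα0 : 0 ≤ α) (hα1 : α ≤ 1)
    (hw : ∀ r, 0 ≤ w r) (hc : ∃ r, 0 < c r) :
    ∃ e, (∀ r, 0 ≤ 1 + e * c r) ∧ (∃ r, 1 + e * c r = 0) ∧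
      ∑ r, (1 + e * c r) ^ α * w r ≤ ∑ r, w r := by
  obtain ⟨a, ha, haS, haz⟩ := exists_neg_one_add_mul_boundary hc
  by_cases hneg : ∃ r, c r < 0
  · obtain ⟨b, hb, hbS, hbz⟩ := exists_pos_one_add_mul_boundary hneg
    have hmin := min_sum_one_add_mul_rpow_mul_le hα0 hα1 hw ha hb haS hbS
    rcases min_choice (∑ r, (1 + a * c r) ^ α * w r) (∑ r, (1 + b * c r) ^ α * w r) with h | h
    · exact ⟨a, haS, haz, h ▸ hmin⟩
    · exact ⟨b, hbS, hbz, h ▸ hmin⟩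
  · simp only [not_exists, not_lt] at hneg
    refine ⟨a, haS, haz, sum_le_sum fun r _ => mul_le_of_le_one_left (hw r) ?_⟩
    exact Real.rpow_le_one (haS r) (by nlinarith [hneg r]) hα0

lemma exists_le_sum_eq_of_le_sum {g : ι → ℝ} (hg : ∀ r, 0 ≤ g r) {s : ℝ} (hs : 0 ≤ s)
    (hsg : s ≤ ∑ r, g r) : ∃ f : ι → ℝ, (∀ r, 0 ≤ f r ∧ f r ≤ g r) ∧ ∑ r, f r = s := by
  have hS : 0 ≤ ∑ r, g r := sum_nonneg fun r _ => hg r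
  have hq : s / ∑ r, g r ≤ 1 := div_le_one_of_le₀ hsg hS
  refine ⟨fun r => g r * (s / ∑ r, g r),
    fun r => ⟨mul_nonneg (hg r) (div_nonneg hs hS), mul_le_of_le_one_right (hg r) hq⟩, ?_⟩
  rw [← sum_mul]
  rcases hS.eq_or_lt with h | h
  · rw [← h]; linarith
  · exact mul_div_cancel₀ s h.ne'

end RealFamilies

section Reindex

variable {E M : Type*} [Zero E] [AddCommMonoid M] {F : E → M}

lemma sum_comp_append_zero (hF : F 0 = 0) {m : ℕ} (n : ℕ) (f : Fin m → E) :
    ∑ r, F (Fin.append f (0 : Fin n → E) r) = ∑ r, F (f r) := by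
  simp [Fin.sum_univ_add, hF]

lemma sum_comp_succAbove_of_eq_zero (hF : F 0 = 0) {m : ℕ} {g : Fin (m + 1) → E}
    {r₀ : Fin (m + 1)} (hr₀ : g r₀ = 0) :
    ∑ j, F (g (r₀.succAbove j)) = ∑ r, F (g r) := by
  simp [Fin.sum_univ_succAbove _ r₀, hr₀, hF]

end Reindex

section Homogeneous

variable {E : Type*} [AddCommGroup E] [Module ℝ E] {C : Set E} {α : ℝ} {J : E → ℝ}

lemma map_zero_of_homogeneousOn (hα : 0 < α) (h0 : (0 : E) ∈ C)
    (hJ : ∀ l : ℝ, 0 < l → ∀ x ∈ C, J (l • x) = l ^ α * J x) : J 0 = 0 := by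
  have h := hJ 2 two_pos 0 h0
  rw [smul_zero] at h
  have h2 : 1 < (2 : ℝ) ^ α := Real.one_lt_rpow one_lt_two hα
  have : ((2 : ℝ) ^ α - 1) * J 0 = 0 := by linarith
  exact (mul_eq_zero.1 this).resolve_left (by linarith)

lemma map_smul_of_homogeneousOn (hα : α ≠ 0)
    (hJ : ∀ l : ℝ, 0 < l → ∀ x ∈ C, J (l • x) = l ^ α * J x) (hJ0 : J 0 = 0)
    {l : ℝ} (hl : 0 ≤ l) {x : E} (hx : x ∈ C) : J (l • x) = l ^ α * J x := by
  rcases hl.eq_or_lt with rfl | hl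
  · simp [hJ0, Real.zero_rpow hα]
  · exact hJ l hl x hx

theorem exists_sum_eq_cost_le_of_not_linearIndependent (hα0 : 0 < α) (hα1 : α ≤ 1)
    (hC : ∀ x ∈ C, ∀ l : ℝ, 0 ≤ l → l • x ∈ C)
    (hJ : ∀ l : ℝ, 0 < l → ∀ x ∈ C, J (l • x) = l ^ α * J x) (hJ0 : J 0 = 0)
    (hJnn : ∀ x ∈ C, 0 ≤ J x) {ι : Type*} [Fintype ι]
    {f : ι → E} (hf : ∀ r, f r ∈ C) (hdep : ¬LinearIndependent ℝ f) :
    ∃ g : ι → E, (∀ r, g r ∈ C) ∧ ∑ r, g r = ∑ r, f r ∧ (∃ r, g r = 0) ∧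
      ∑ r, J (g r) ≤ ∑ r, J (f r) := by
  obtain ⟨c, hc, hpos⟩ : ∃ c : ι → ℝ, ∑ r, c r • f r = 0 ∧ ∃ r, 0 < c r := by
    obtain ⟨c, hc, r, hr⟩ := Fintype.not_linearIndependent_iff.1 hdep
    rcases hr.lt_or_gt with hr | hr
    · exact ⟨-c, by simp [neg_smul, hc], r, by simpa using hr⟩
    · exact ⟨c, hc, r, hr⟩
  obtain ⟨e, he, ⟨r₀, hr₀⟩, hcost⟩ :=
    exists_boundary_sum_one_add_mul_rpow_mul_le hα0.le hα1 (fun r => hJnn _ (hf r)) hpos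
  refine ⟨fun r => (1 + e * c r) • f r, fun r => hC _ (hf r) _ (he r), ?_,
    ⟨r₀, by simp [hr₀]⟩, ?_⟩
  · simp only [add_smul, one_smul, mul_smul, sum_add_distrib, ← smul_sum, hc, smul_zero,
      add_zero]
  · calc ∑ r, J ((1 + e * c r) • f r) = ∑ r, (1 + e * c r) ^ α * J (f r) :=
          sum_congr rfl fun r _ => map_smul_of_homogeneousOn hα0.ne' hJ hJ0 (he r) (hf r)
      _ ≤ ∑ r, J (f r) := hcost

theorem exists_fin_sum_eq_cost_le_of_le [FiniteDimensional ℝ E] (hα0 : 0 < α) (hα1 : α ≤ 1)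
    (hC : ∀ x ∈ C, ∀ l : ℝ, 0 ≤ l → l • x ∈ C)
    (hJ : ∀ l : ℝ, 0 < l → ∀ x ∈ C, J (l • x) = l ^ α * J x) (hJ0 : J 0 = 0)
    (hJnn : ∀ x ∈ C, 0 ≤ J x) {n : ℕ}
    (hn : Module.finrank ℝ E ≤ n) {m : ℕ} (hm : n ≤ m) (f : Fin m → E) (hf : ∀ r, f r ∈ C) :
    ∃ g : Fin n → E, (∀ r, g r ∈ C) ∧ ∑ r, g r = ∑ r, f r ∧ ∑ r, J (g r) ≤ ∑ r, J (f r) := by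
  induction m, hm using Nat.le_induction with
  | base => exact ⟨f, hf, rfl, le_rfl⟩
  | succ m hnm ih =>
    have hdep : ¬LinearIndependent ℝ f := fun h => by
      have := h.fintype_card_le_finrank
      simp only [Fintype.card_fin] at this
      omega
    obtain ⟨g, hg, hsum, ⟨r₀, hr₀⟩, hcost⟩ :=
      exists_sum_eq_cost_le_of_not_linearIndependent hα0 hα1 hC hJ hJ0 hJnn hf hdep
    obtain ⟨g', hg', hsum', hcost'⟩ := ih (fun j => g (r₀.succAbove j)) (fun j => hg _)
    refine ⟨g', hg', ?_, ?_⟩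
    · exact hsum'.trans ((sum_comp_succAbove_of_eq_zero (F := id) rfl hr₀).trans hsum)
    · exact (hcost'.trans_eq (sum_comp_succAbove_of_eq_zero hJ0 hr₀)).trans hcost

theorem exists_fin_sum_eq_cost_le [FiniteDimensional ℝ E] (hα0 : 0 < α) (hα1 : α ≤ 1)
    (hC : ∀ x ∈ C, ∀ l : ℝ, 0 ≤ l → l • x ∈ C) (h0 : (0 : E) ∈ C)
    (hJ : ∀ l : ℝ, 0 < l → ∀ x ∈ C, J (l • x) = l ^ α * J x) (hJ0 : J 0 = 0)
    (hJnn : ∀ x ∈ C, 0 ≤ J x) {n : ℕ} (hn : Module.finrank ℝ E ≤ n) {m : ℕ} (f : Fin m → E)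
    (hf : ∀ r, f r ∈ C) :
    ∃ g : Fin n → E, (∀ r, g r ∈ C) ∧ ∑ r, g r = ∑ r, f r ∧ ∑ r, J (g r) ≤ ∑ r, J (f r) := by
  have hpad : ∀ r, Fin.append f (0 : Fin n → E) r ∈ C :=
    Fin.addCases (by simpa using hf) (by simp [h0])
  obtain ⟨g, hg, hsum, hcost⟩ := exists_fin_sum_eq_cost_le_of_le hα0 hα1 hC hJ hJ0 hJnn hn
    (Nat.le_add_left n m) _ hpad
  exact ⟨g, hg, hsum.trans (sum_comp_append_zero (F := id) rfl n f),
    hcost.trans_eq (sum_comp_append_zero hJ0 n f)⟩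

end Homogeneous

theorem rate_function_k_summands_general
    (k : ℕ) (α : ℝ) (hα : α ∈ Set.Ioo (0:ℝ) 1)
    (J : (Fin k → ℝ) → ℝ)
    (hJnn : ∀ x, 0 ≤ J x)
    (hJmono : ∀ x y : Fin k → ℝ, (∀ i, 0 ≤ x i) → (∀ i, x i ≤ y i) → J x ≤ J y)
    (hJhom : ∀ l : ℝ, 0 < l → ∀ x : Fin k → ℝ, (∀ i, 0 ≤ x i) →
      J (fun i => l * x i) = l ^ α * J x)
    (t : Fin k → ℝ) (ht : ∀ i, 0 ≤ t i) :
    sInf {v : ℝ | ∃ f : Fin k → Fin k → ℝ,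
        (∀ r i, 0 ≤ f r i) ∧ (∀ i, ∑ r, f r i = t i) ∧ v = ∑ r, J (f r)}
      = sInf {v : ℝ | ∃ (m : ℕ) (f : Fin m → Fin k → ℝ), 0 < m ∧
        (∀ r i, 0 ≤ f r i) ∧ (∀ i, t i ≤ ∑ r, f r i) ∧ v = ∑ r, J (f r)} := by
  set C : Set (Fin k → ℝ) := {x | ∀ i, 0 ≤ x i}
  have h0 : (0 : Fin k → ℝ) ∈ C := fun _ => le_rfl
  have hC : ∀ x ∈ C, ∀ l : ℝ, 0 ≤ l → l • x ∈ C := fun x hx l hl i => mul_nonneg hl (hx i)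
  have hJ : ∀ l : ℝ, 0 < l → ∀ x ∈ C, J (l • x) = l ^ α * J x := hJhom
  have hJ0 : J 0 = 0 := map_zero_of_homogeneousOn hα.1 h0 hJ
  have hn : Module.finrank ℝ (Fin k → ℝ) ≤ k := (Module.finrank_fin_fun ℝ).le
  apply csInf_eq_csInf_of_forall_exists_le
  · rintro _ ⟨f, hf, hsum, rfl⟩
    refine ⟨_, ⟨k + 1, Fin.append f 0, k.succ_pos, Fin.addCases (by simpa using hf) (by simp),
      fun i => ?_, rfl⟩, (sum_comp_append_zero hJ0 1 f).le⟩
    exact (hsum i).symm.trans_le (sum_comp_append_zero (F := fun x => x i) rfl 1 f).ge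
  · rintro _ ⟨m, g, -, hg, hge, rfl⟩
    choose f hf hfsum using fun i => exists_le_sum_eq_of_le_sum (fun r => hg r i) (ht i) (hge i)
    obtain ⟨f', hf', hsum, hcost⟩ := exists_fin_sum_eq_cost_le hα.1 hα.2.le hC h0 hJ hJ0
      (fun x _ => hJnn x) hn (fun r i => f i r) (fun r i => (hf i r).1)
    refine ⟨_, ⟨f', hf', fun i => ?_, rfl⟩, hcost.trans (sum_le_sum fun r _ =>
      hJmono _ _ (fun i => (hf i r).1) fun i => (hf i r).2)⟩
    rw [← Finset.sum_apply, hsum, Finset.sum_apply]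
    exact hfsum i

/-- For a lower semicontinuous, componentwise nondecreasing,
positively `α`-homogeneous `J : ℝ₊^k → [0,∞)`, the infimum over decompositions of `t`
into exactly `k` nonnegative summands summing to `t` equals the infimum over any number
`m ≥ 1` of nonnegative summands whose sum dominates `t` componentwise. -/
theorem rate_function_k_summands
    (k : ℕ) (α : ℝ) (hα : α ∈ Set.Ioo (0:ℝ) 1)
    (J : (Fin k → ℝ) → ℝ)
    (hJnn : ∀ x, 0 ≤ J x)
    (hJlsc : LowerSemicontinuousOn J {x | ∀ i, 0 ≤ x i})
    (hJmono : ∀ x y : Fin k → ℝ, (∀ i, 0 ≤ x i) → (∀ i, x i ≤ y i) → J x ≤ J y)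
    (hJhom : ∀ l : ℝ, 0 < l → ∀ x : Fin k → ℝ, (∀ i, 0 ≤ x i) →
      J (fun i => l * x i) = l ^ α * J x)
    (t : Fin k → ℝ) (ht : ∀ i, 0 ≤ t i) :
    sInf {v : ℝ | ∃ f : Fin k → Fin k → ℝ,
        (∀ r i, 0 ≤ f r i) ∧ (∀ i, ∑ r, f r i = t i) ∧ v = ∑ r, J (f r)}
      = sInf {v : ℝ | ∃ (m : ℕ) (f : Fin m → Fin k → ℝ), 0 < m ∧
        (∀ r i, 0 ≤ f r i) ∧ (∀ i, t i ≤ ∑ r, f r i) ∧ v = ∑ r, J (f r)} :=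
  rate_function_k_summands_general k α hα J hJnn hJmono hJhom t ht
end

section
/- Let $R\ge0$ satisfy $\mathbb{P}(R\ge t)=\exp(-t^{1/2})$ for $t\ge0$, fix $\varepsilon\in(0,1)$, let $V$ be uniform on $\{(1,\varepsilon),(\varepsilon,1)\}$ and $S_1,S_2$ i.i.d. Rademacher, all independent. Set $X=(RV_1S_1, RV_2S_2)$. Then for $t_1,t_2>0$, $\mathbb{P}(X_1\ge t_1, X_2\ge t_2) = \tfrac18\exp(-(\max\{t_1,t_2/\varepsilon\})^{1/2}) + \tfrac18\exp(-(\max\{t_1/\varepsilon,t_2\})^{1/2})$, and consequently $\lim_{x\to\infty}x^{-1/2}\log\mathbb{P}(X\ge x(t_1,t_2)) = -\min\{(\max\{t_1,t_2/\varepsilon\})^{1/2},(\max\{t_1/\varepsilon,t_2\})^{1/2}\}$; in particular $\mathcal{J}(1,1)=\varepsilon^{-1/2}$. -/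
open MeasureTheory Filter Real Set

lemma smul_prod' {α β : Type*} [MeasurableSpace α] [MeasurableSpace β]
    (c : ENNReal) (μ : Measure α) (ν : Measure β) [SFinite ν] :
    (c • μ).prod ν = c • μ.prod ν := by
  ext s hs
  rw [Measure.prod_apply hs, Measure.smul_apply, Measure.prod_apply hs,
    lintegral_smul_measure, smul_eq_mul]

lemma prod_smul' {α β : Type*} [MeasurableSpace α] [MeasurableSpace β]
    (c : ENNReal) (μ : Measure α) [SFinite μ] (ν : Measure β) [SFinite ν] :
    μ.prod (c • ν) = c • μ.prod ν := by
  ext s hs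
  rw [Measure.prod_apply_symm hs, Measure.smul_apply, Measure.prod_apply_symm hs,
    lintegral_smul_measure, smul_eq_mul]

/-- The law of the sign `S`: Rademacher, `P(S = ±1) = 1/2`. -/
noncomputable def rademacherLaw : Measure ℝ :=
  ((1:ENNReal)/2) • Measure.dirac (1:ℝ) + ((1:ENNReal)/2) • Measure.dirac (-1:ℝ)

/-- The law of the direction `V`: uniform on `{(1,ε),(ε,1)}`. -/
noncomputable def directionLaw (ε : ℝ) : Measure (ℝ × ℝ) :=
  ((1:ENNReal)/2) • Measure.dirac ((1:ℝ), ε) + ((1:ENNReal)/2) • Measure.dirac (ε, (1:ℝ))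

lemma expand_rho (ε : ℝ) :
    (directionLaw ε).prod (rademacherLaw.prod rademacherLaw) =
      ((1:ENNReal)/8) • Measure.dirac (((1:ℝ), ε), (1:ℝ), (1:ℝ))
      + ((1:ENNReal)/8) • Measure.dirac (((1:ℝ), ε), (1:ℝ), (-1:ℝ))
      + ((1:ENNReal)/8) • Measure.dirac (((1:ℝ), ε), (-1:ℝ), (1:ℝ))
      + ((1:ENNReal)/8) • Measure.dirac (((1:ℝ), ε), (-1:ℝ), (-1:ℝ))
      + ((1:ENNReal)/8) • Measure.dirac ((ε, (1:ℝ)), (1:ℝ), (1:ℝ))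
      + ((1:ENNReal)/8) • Measure.dirac ((ε, (1:ℝ)), (1:ℝ), (-1:ℝ))
      + ((1:ENNReal)/8) • Measure.dirac ((ε, (1:ℝ)), (-1:ℝ), (1:ℝ))
      + ((1:ENNReal)/8) • Measure.dirac ((ε, (1:ℝ)), (-1:ℝ), (-1:ℝ)) := by
  simp only [rademacherLaw, directionLaw, Measure.prod_add, Measure.add_prod,
    smul_prod', prod_smul', Measure.dirac_prod_dirac, smul_smul, smul_add]
  have h8 : ((1:ENNReal)/2 * (1/2) * (1/2)) = 1/8 := by
    rw [show (8:ENNReal) = 2*2*2 by norm_num, one_div, one_div,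
      ENNReal.mul_inv (by norm_num) (by norm_num), ENNReal.mul_inv (by norm_num) (by norm_num)]
  rw [h8]
  abel

lemma key_val (ε : ℝ) (hε0 : 0 < ε) (νR : Measure ℝ) [IsProbabilityMeasure νR]
    (hνR : ∀ t : ℝ, 0 ≤ t → νR (Set.Ici t) = ENNReal.ofReal (Real.exp (-(t ^ ((1:ℝ)/2)))))
    (u1 u2 : ℝ) (h1 : 0 < u1) (h2 : 0 < u2) :
    (νR.prod ((directionLaw ε).prod (rademacherLaw.prod rademacherLaw)))
      {p : ℝ × (ℝ × ℝ) × ℝ × ℝ | u1 ≤ p.1 * p.2.1.1 * p.2.2.1 ∧ u2 ≤ p.1 * p.2.1.2 * p.2.2.2}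
    = ENNReal.ofReal ((1/8) * Real.exp (-((max u1 (u2/ε)) ^ ((1:ℝ)/2)))
        + (1/8) * Real.exp (-((max (u1/ε) u2) ^ ((1:ℝ)/2)))) := by
  have hIio : νR (Set.Iio (0:ℝ)) = 0 := by
    have h0 : νR (Set.Ici (0:ℝ)) = 1 := by
      rw [hνR 0 le_rfl, Real.zero_rpow (by norm_num), neg_zero, Real.exp_zero,
        ENNReal.ofReal_one]
    have := measure_compl (measurableSet_Ici (a := (0:ℝ))) (measure_ne_top νR _)
    rw [compl_Ici] at this
    rw [this, h0, measure_univ, tsub_self]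
  have hm1 : Measurable fun p : ℝ × (ℝ × ℝ) × ℝ × ℝ => p.1 * p.2.1.1 * p.2.2.1 :=
    (measurable_fst.mul measurable_snd.fst.fst).mul measurable_snd.snd.fst
  have hm2 : Measurable fun p : ℝ × (ℝ × ℝ) × ℝ × ℝ => p.1 * p.2.1.2 * p.2.2.2 :=
    (measurable_fst.mul measurable_snd.fst.snd).mul measurable_snd.snd.snd
  have hA : MeasurableSet {p : ℝ × (ℝ × ℝ) × ℝ × ℝ |
      u1 ≤ p.1 * p.2.1.1 * p.2.2.1 ∧ u2 ≤ p.1 * p.2.1.2 * p.2.2.2} :=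
    (measurableSet_le measurable_const hm1).inter (measurableSet_le measurable_const hm2)
  rw [expand_rho]
  simp only [Measure.prod_add, prod_smul', Measure.prod_dirac]
  simp only [Measure.coe_add, Pi.add_apply, Measure.smul_apply, smul_eq_mul]
  rw [Measure.map_apply measurable_prodMk_right hA,
    Measure.map_apply measurable_prodMk_right hA, Measure.map_apply measurable_prodMk_right hA,
    Measure.map_apply measurable_prodMk_right hA, Measure.map_apply measurable_prodMk_right hA,
    Measure.map_apply measurable_prodMk_right hA, Measure.map_apply measurable_prodMk_right hA,
    Measure.map_apply measurable_prodMk_right hA]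
  simp only [Set.preimage_setOf_eq]
  have hg1 : νR {a : ℝ | u1 ≤ a * 1 * 1 ∧ u2 ≤ a * ε * 1}
      = ENNReal.ofReal (Real.exp (-(max u1 (u2/ε)) ^ ((1:ℝ)/2))) := by
    have hset : {a : ℝ | u1 ≤ a * 1 * 1 ∧ u2 ≤ a * ε * 1} = Set.Ici (max u1 (u2/ε)) := by
      ext r
      simp only [Set.mem_setOf_eq, Set.mem_Ici, mul_one, max_le_iff, div_le_iff₀ hε0]
    rw [hset, hνR _ (le_max_of_le_left h1.le)]
  have hg2 : νR {a : ℝ | u1 ≤ a * ε * 1 ∧ u2 ≤ a * 1 * 1}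
      = ENNReal.ofReal (Real.exp (-(max (u1/ε) u2) ^ ((1:ℝ)/2))) := by
    have hset : {a : ℝ | u1 ≤ a * ε * 1 ∧ u2 ≤ a * 1 * 1} = Set.Ici (max (u1/ε) u2) := by
      ext r
      simp only [Set.mem_setOf_eq, Set.mem_Ici, mul_one, max_le_iff, div_le_iff₀ hε0]
    rw [hset, hνR _ (le_max_of_le_right h2.le)]
  have hb1 : νR {a : ℝ | u1 ≤ a * 1 * 1 ∧ u2 ≤ a * ε * -1} = 0 :=
    measure_mono_null (fun r hr => by
      simp only [Set.mem_setOf_eq] at hr; simp only [Set.mem_Iio]; nlinarith [hr.2]) hIio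
  have hb2 : νR {a : ℝ | u1 ≤ a * 1 * -1 ∧ u2 ≤ a * ε * 1} = 0 :=
    measure_mono_null (fun r hr => by
      simp only [Set.mem_setOf_eq] at hr; simp only [Set.mem_Iio]; nlinarith [hr.1]) hIio
  have hb3 : νR {a : ℝ | u1 ≤ a * 1 * -1 ∧ u2 ≤ a * ε * -1} = 0 :=
    measure_mono_null (fun r hr => by
      simp only [Set.mem_setOf_eq] at hr; simp only [Set.mem_Iio]; nlinarith [hr.1]) hIio
  have hb4 : νR {a : ℝ | u1 ≤ a * ε * 1 ∧ u2 ≤ a * 1 * -1} = 0 :=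
    measure_mono_null (fun r hr => by
      simp only [Set.mem_setOf_eq] at hr; simp only [Set.mem_Iio]; nlinarith [hr.2]) hIio
  have hb5 : νR {a : ℝ | u1 ≤ a * ε * -1 ∧ u2 ≤ a * 1 * 1} = 0 :=
    measure_mono_null (fun r hr => by
      simp only [Set.mem_setOf_eq] at hr; simp only [Set.mem_Iio]; nlinarith [hr.1]) hIio
  have hb6 : νR {a : ℝ | u1 ≤ a * ε * -1 ∧ u2 ≤ a * 1 * -1} = 0 :=
    measure_mono_null (fun r hr => by
      simp only [Set.mem_setOf_eq] at hr; simp only [Set.mem_Iio]; nlinarith [hr.1]) hIio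
  rw [hg1, hg2, hb1, hb2, hb3, hb4, hb5, hb6]
  rw [ENNReal.ofReal_add (by positivity) (by positivity), ENNReal.ofReal_mul (by norm_num),
    ENNReal.ofReal_mul (by norm_num), ENNReal.ofReal_div_of_pos (by norm_num)]
  simp [ENNReal.ofReal_one, ENNReal.ofReal_ofNat]

/-- For `X = (R V₁ S₁, R V₂ S₂)` with `R` Weibull(1/2), `V` uniform on
`{(1,ε),(ε,1)}`, `S₁,S₂` Rademacher, all independent: the joint upper tail is
`P(X₁ ≥ t₁, X₂ ≥ t₂) = ⅛ e^{-(max(t₁,t₂/ε))^{1/2}} + ⅛ e^{-(max(t₁/ε,t₂))^{1/2}}`,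
hence `lim_x x^{-1/2} log P(X ≥ x t) = -min{(max(t₁,t₂/ε))^{1/2},(max(t₁/ε,t₂))^{1/2}}`;
in particular `J(1,1) = ε^{-1/2}`. -/
theorem two_component_weibull_joint_tail
    {Ω : Type*} [MeasurableSpace Ω] (μ : Measure Ω) [IsProbabilityMeasure μ]
    (ε : ℝ) (hε : ε ∈ Set.Ioo (0:ℝ) 1)
    (R : Ω → ℝ) (V : Ω → ℝ × ℝ) (S1 S2 : Ω → ℝ)
    (hR : Measurable R) (hV : Measurable V) (hS1 : Measurable S1) (hS2 : Measurable S2)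
    (νR : Measure ℝ) [IsProbabilityMeasure νR]
    (hνR : ∀ t : ℝ, 0 ≤ t → νR (Set.Ici t) = ENNReal.ofReal (Real.exp (-(t ^ ((1:ℝ)/2)))))
    (hjoint : Measure.map (fun ω => (R ω, V ω, S1 ω, S2 ω)) μ =
      νR.prod ((directionLaw ε).prod (rademacherLaw.prod rademacherLaw))) :
    ∀ t1 t2 : ℝ, 0 < t1 → 0 < t2 →
      ((μ {ω | t1 ≤ R ω * (V ω).1 * S1 ω ∧ t2 ≤ R ω * (V ω).2 * S2 ω}).toReal
          = (1/8) * Real.exp (-((max t1 (t2/ε)) ^ ((1:ℝ)/2)))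
            + (1/8) * Real.exp (-((max (t1/ε) t2) ^ ((1:ℝ)/2)))) ∧
      Tendsto (fun x : ℝ =>
          Real.log (μ {ω | x * t1 ≤ R ω * (V ω).1 * S1 ω ∧
            x * t2 ≤ R ω * (V ω).2 * S2 ω}).toReal / x ^ ((1:ℝ)/2))
        atTop (nhds (-(min ((max t1 (t2/ε)) ^ ((1:ℝ)/2)) ((max (t1/ε) t2) ^ ((1:ℝ)/2))))) ∧
      min ((max 1 (1/ε)) ^ ((1:ℝ)/2)) ((max (1/ε) 1) ^ ((1:ℝ)/2)) = ε ^ (-(1:ℝ)/2) := by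
  obtain ⟨hε0, hε1⟩ := hε
  intro t1 t2 ht1 ht2
  have hT : Measurable fun ω => (R ω, V ω, S1 ω, S2 ω) :=
    hR.prodMk (hV.prodMk (hS1.prodMk hS2))
  have hval : ∀ u1 u2 : ℝ, 0 < u1 → 0 < u2 →
      (μ {ω | u1 ≤ R ω * (V ω).1 * S1 ω ∧ u2 ≤ R ω * (V ω).2 * S2 ω}).toReal
        = (1/8) * Real.exp (-((max u1 (u2/ε)) ^ ((1:ℝ)/2)))
          + (1/8) * Real.exp (-((max (u1/ε) u2) ^ ((1:ℝ)/2))) := by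
    intro u1 u2 h1 h2
    have hm1 : Measurable fun p : ℝ × (ℝ × ℝ) × ℝ × ℝ => p.1 * p.2.1.1 * p.2.2.1 :=
      (measurable_fst.mul measurable_snd.fst.fst).mul measurable_snd.snd.fst
    have hm2 : Measurable fun p : ℝ × (ℝ × ℝ) × ℝ × ℝ => p.1 * p.2.1.2 * p.2.2.2 :=
      (measurable_fst.mul measurable_snd.fst.snd).mul measurable_snd.snd.snd
    have hA : MeasurableSet {p : ℝ × (ℝ × ℝ) × ℝ × ℝ |
        u1 ≤ p.1 * p.2.1.1 * p.2.2.1 ∧ u2 ≤ p.1 * p.2.1.2 * p.2.2.2} :=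
      (measurableSet_le measurable_const hm1).inter (measurableSet_le measurable_const hm2)
    have hpre : {ω | u1 ≤ R ω * (V ω).1 * S1 ω ∧ u2 ≤ R ω * (V ω).2 * S2 ω}
        = (fun ω => (R ω, V ω, S1 ω, S2 ω)) ⁻¹' {p : ℝ × (ℝ × ℝ) × ℝ × ℝ |
            u1 ≤ p.1 * p.2.1.1 * p.2.2.1 ∧ u2 ≤ p.1 * p.2.1.2 * p.2.2.2} := rfl
    rw [hpre, ← Measure.map_apply hT hA, hjoint, key_val ε hε0 νR hνR u1 u2 h1 h2,
      ENNReal.toReal_ofReal (by positivity)]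
  refine ⟨hval t1 t2 ht1 ht2, ?_, ?_⟩
  · -- the limit
    set a := (max t1 (t2/ε)) ^ ((1:ℝ)/2) with ha_def
    set b := (max (t1/ε) t2) ^ ((1:ℝ)/2) with hb_def
    have hM1 : 0 < max t1 (t2/ε) := lt_max_of_lt_left ht1
    have hM2 : 0 < max (t1/ε) t2 := lt_max_of_lt_right ht2
    have ha0 : 0 ≤ a := Real.rpow_nonneg hM1.le _
    have hb0 : 0 ≤ b := Real.rpow_nonneg hM2.le _
    set m := min a b with hm_def
    have hm0 : 0 ≤ m := le_min ha0 hb0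
    have hf : ∀ x : ℝ, 1 ≤ x →
        (μ {ω | x * t1 ≤ R ω * (V ω).1 * S1 ω ∧ x * t2 ≤ R ω * (V ω).2 * S2 ω}).toReal
          = (1/8) * Real.exp (-(x ^ ((1:ℝ)/2) * a)) + (1/8) * Real.exp (-(x ^ ((1:ℝ)/2) * b)) := by
      intro x hx
      have hx0 : 0 < x := lt_of_lt_of_le one_pos hx
      rw [hval (x*t1) (x*t2) (by positivity) (by positivity)]
      have e1 : max (x*t1) (x*t2/ε) = x * max t1 (t2/ε) := by
        rw [mul_div_assoc, ← mul_max_of_nonneg _ _ hx0.le]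
      have e2 : max (x*t1/ε) (x*t2) = x * max (t1/ε) t2 := by
        rw [mul_div_assoc, ← mul_max_of_nonneg _ _ hx0.le]
      rw [e1, e2, Real.mul_rpow hx0.le hM1.le, Real.mul_rpow hx0.le hM2.le]
    have hsq : ∀ x : ℝ, 1 ≤ x → (1:ℝ) ≤ x ^ ((1:ℝ)/2) := by
      intro x hx
      calc (1:ℝ) = 1 ^ ((1:ℝ)/2) := (Real.one_rpow _).symm
        _ ≤ x ^ ((1:ℝ)/2) := Real.rpow_le_rpow (by norm_num) hx (by norm_num)
    -- bounds
    have hlow : ∀ᶠ x in atTop, (Real.log (1/8) - x ^ ((1:ℝ)/2) * m) / x ^ ((1:ℝ)/2)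
        ≤ Real.log (μ {ω | x * t1 ≤ R ω * (V ω).1 * S1 ω ∧
            x * t2 ≤ R ω * (V ω).2 * S2 ω}).toReal / x ^ ((1:ℝ)/2) := by
      filter_upwards [eventually_ge_atTop (1:ℝ)] with x hx
      have hs1 : (1:ℝ) ≤ x ^ ((1:ℝ)/2) := hsq x hx
      have hs0 : (0:ℝ) < x ^ ((1:ℝ)/2) := lt_of_lt_of_le one_pos hs1
      rw [hf x hx]
      gcongr
      have hlog : Real.log (1/8 * Real.exp (-(x ^ ((1:ℝ)/2) * m)))
          = Real.log (1/8) - x ^ ((1:ℝ)/2) * m := by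
        rw [Real.log_mul (by norm_num) (Real.exp_ne_zero _), Real.log_exp]; ring
      rw [← hlog]
      apply Real.log_le_log (by positivity)
      rcases min_cases a b with ⟨hmin, _⟩ | ⟨hmin, _⟩
      · rw [hm_def, hmin]
        nlinarith [Real.exp_pos (-(x ^ ((1:ℝ)/2) * b))]
      · rw [hm_def, hmin]
        nlinarith [Real.exp_pos (-(x ^ ((1:ℝ)/2) * a))]
    have hhigh : ∀ᶠ x in atTop,
        Real.log (μ {ω | x * t1 ≤ R ω * (V ω).1 * S1 ω ∧
            x * t2 ≤ R ω * (V ω).2 * S2 ω}).toReal / x ^ ((1:ℝ)/2)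
        ≤ (Real.log (1/4) - x ^ ((1:ℝ)/2) * m) / x ^ ((1:ℝ)/2) := by
      filter_upwards [eventually_ge_atTop (1:ℝ)] with x hx
      have hs1 : (1:ℝ) ≤ x ^ ((1:ℝ)/2) := hsq x hx
      have hs0 : (0:ℝ) < x ^ ((1:ℝ)/2) := lt_of_lt_of_le one_pos hs1
      rw [hf x hx]
      gcongr
      have hlog : Real.log (1/4 * Real.exp (-(x ^ ((1:ℝ)/2) * m)))
          = Real.log (1/4) - x ^ ((1:ℝ)/2) * m := by
        rw [Real.log_mul (by norm_num) (Real.exp_ne_zero _), Real.log_exp]; ring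
      rw [← hlog]
      apply Real.log_le_log (by positivity)
      have hea : Real.exp (-(x ^ ((1:ℝ)/2) * a)) ≤ Real.exp (-(x ^ ((1:ℝ)/2) * m)) := by
        apply Real.exp_le_exp.2; nlinarith [min_le_left a b]
      have heb : Real.exp (-(x ^ ((1:ℝ)/2) * b)) ≤ Real.exp (-(x ^ ((1:ℝ)/2) * m)) := by
        apply Real.exp_le_exp.2; nlinarith [min_le_right a b]
      nlinarith
    have hsT : Tendsto (fun x : ℝ => x ^ ((1:ℝ)/2)) atTop atTop :=
      tendsto_rpow_atTop (by norm_num)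
    have hlim : ∀ c : ℝ, Tendsto (fun x : ℝ => (c - x ^ ((1:ℝ)/2) * m) / x ^ ((1:ℝ)/2))
        atTop (nhds (-m)) := by
      intro c
      have h1 : Tendsto (fun x : ℝ => c / x ^ ((1:ℝ)/2) - m) atTop (nhds (0 - m)) :=
        (tendsto_const_nhds.div_atTop hsT).sub_const m
      rw [zero_sub] at h1
      apply h1.congr'
      filter_upwards [eventually_ge_atTop (1:ℝ)] with x hx
      have hs0 : (0:ℝ) < x ^ ((1:ℝ)/2) := lt_of_lt_of_le one_pos (hsq x hx)
      field_simp
    exact tendsto_of_tendsto_of_tendsto_of_le_of_le' (hlim (Real.log (1/8)))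
      (hlim (Real.log (1/4))) hlow hhigh
  · -- J(1,1)
    have h1ε : (1:ℝ) ≤ 1/ε := by
      rw [le_div_iff₀ hε0]; linarith
    rw [max_eq_right h1ε, max_eq_left h1ε, min_self, one_div, Real.inv_rpow hε0.le,
      ← Real.rpow_neg hε0.le]
    norm_num
end

section
/- In the setting of the two-big-jumps example ($R$ Weibull(1/2), $V$ uniform on $\{(1,\varepsilon),(\varepsilon,1)\}$, Rademacher signs, $X_i$ i.i.d. copies of $X=(RV_1S_1,RV_2S_2)$), for every $\varepsilon\in(0,1)$ one has $\liminf_{N\to\infty} N^{-1/2}\log\mathbb{P}\big(N^{-1}\sum_{i=1}^N X_i \ge (1,1)\big) \ge -2$. In particular, when $\varepsilon<1/4$ this lower bound $-2$ is strictly larger than $-\mathcal{J}(1,1)=-\varepsilon^{-1/2}$, so the single-jump rate $\mathcal{J}$ is not the correct rate for this event. -/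
open MeasureTheory Filter Real Set

/-- The law of one summand `X = (R V₁ S₁, R V₂ S₂)`. -/
noncomputable def twoJumpLaw (ε : ℝ) (νR : Measure ℝ) [IsProbabilityMeasure νR] :
    Measure (ℝ × ℝ) :=
  Measure.map
    (fun p : ℝ × ((ℝ × ℝ) × (ℝ × ℝ)) =>
      (p.1 * p.2.1.1 * p.2.2.1, p.1 * p.2.1.2 * p.2.2.2))
    (νR.prod ((directionLaw ε).prod (rademacherLaw.prod rademacherLaw)))

open ProbabilityTheory
open scoped Pointwise ENNReal Topology

/-! The event is forced by two big jumps: the first summand goes along the direction `(1, ε)`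
to `[N, ∞) × [0, ∞)` and the second along `(ε, 1)` to `[0, ∞) × [N, ∞)`, each with probability
at least `e^{-√N}/8`. In place of the law of large numbers, the remaining `N - 2` summands are
handled by sign symmetry: their sum has a law invariant under both coordinate reflections, so it
lies in the closed positive quadrant with probability at least `1/4`. By independence the event
has probability at least `e^{-2√N}/256`, which gives the rate `-2`; and `ε^{-1/2} > 2` exactly
when `ε < 1/4`. -/

lemma inv_two_le_half_dirac_add_half_dirac_apply {α : Type*} [MeasurableSpace α] (x y : α) :
    2⁻¹ ≤ ((1 / 2 : ℝ≥0∞) • Measure.dirac x + (1 / 2 : ℝ≥0∞) • Measure.dirac y) {x} := by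
  simp [Measure.dirac_apply_of_mem (mem_singleton x)]

def reflectFst : ℝ × ℝ →+ ℝ × ℝ := (-AddMonoidHom.id ℝ).prodMap (AddMonoidHom.id ℝ)

def reflectSnd : ℝ × ℝ →+ ℝ × ℝ := (AddMonoidHom.id ℝ).prodMap (-AddMonoidHom.id ℝ)

lemma measurable_reflectFst : Measurable reflectFst := measurable_neg.prodMap measurable_id

lemma measurable_reflectSnd : Measurable reflectSnd := measurable_id.prodMap measurable_neg

lemma inv_four_le_measure_Ici_zero (ν : Measure (ℝ × ℝ)) [IsProbabilityMeasure ν]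
    (h₁ : MeasurePreserving reflectFst ν ν) (h₂ : MeasurePreserving reflectSnd ν ν) :
    4⁻¹ ≤ ν (Ici 0) := by
  set Q : Set (ℝ × ℝ) := Ici 0
  have hQ : MeasurableSet Q := measurableSet_Ici
  have hcover :
      univ ⊆ Q ∪ reflectFst ⁻¹' Q ∪ reflectSnd ⁻¹' Q ∪ (reflectFst ∘ reflectSnd) ⁻¹' Q := by
    rintro ⟨x, y⟩ -
    rcases le_total 0 x with hx | hx <;> rcases le_total 0 y with hy | hy <;>
      simp [Q, reflectFst, reflectSnd, Prod.le_def, hx, hy]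
  have h1 : 1 ≤ 4 * ν Q := calc
    1 = ν univ := measure_univ.symm
    _ ≤ ν Q + ν (reflectFst ⁻¹' Q) + ν (reflectSnd ⁻¹' Q) + ν ((reflectFst ∘ reflectSnd) ⁻¹' Q) :=
      (measure_mono hcover).trans <| (measure_union_le _ _).trans <| add_le_add_left
        ((measure_union_le _ _).trans <| add_le_add_left (measure_union_le _ _) _) _
    _ = 4 * ν Q := by
      rw [h₁.measure_preimage hQ.nullMeasurableSet, h₂.measure_preimage hQ.nullMeasurableSet,
        (h₁.comp h₂).measure_preimage hQ.nullMeasurableSet]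
      ring
  exact (ENNReal.inv_le_iff_le_mul (by simp) (by simp)).2 h1

section SumOfIndependent

variable {Ω ι : Type*} [MeasurableSpace Ω] {μ : Measure Ω}

lemma measurePreserving_map_sum_of_iIndepFun {M : Type*} [AddCommMonoid M] [MeasurableSpace M]
    [MeasurableAdd₂ M] [IsFiniteMeasure μ] {X : ι → Ω → M} (hindep : iIndepFun X μ)
    (hmeas : ∀ i, Measurable (X i)) {L : M →+ M} (hL : Measurable L)
    (hX : ∀ i, MeasurePreserving L (μ.map (X i)) (μ.map (X i))) (s : Finset ι) :
    MeasurePreserving L (μ.map (∑ i ∈ s, X i)) (μ.map (∑ i ∈ s, X i)) := by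
  classical
  refine ⟨hL, ?_⟩
  induction s using Finset.induction_on with
  | empty => simp [Pi.zero_def, Measure.map_const, Measure.map_smul, Measure.map_dirac' hL]
  | insert j s hj ih =>
    have hindep_j : IndepFun (X j) (∑ i ∈ s, X i) μ :=
      (hindep.indepFun_finsetSum_of_notMem hmeas hj).symm
    rw [Finset.sum_insert hj,
      hindep_j.map_add_eq_map_conv_map (hmeas j) (by fun_prop),
      Measure.map_conv_addMonoidHom L hL, (hX j).map_eq, ih]

lemma ProbabilityTheory.IndepFun.mul_le_measure_add_preimage {M : Type*} [Add M]
    [MeasurableSpace M] {X Y : Ω → M} (h : IndepFun X Y μ) {A B C : Set M}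
    (hA : MeasurableSet A) (hB : MeasurableSet B) (hABC : A + B ⊆ C) : μ (X ⁻¹' A) * μ (Y ⁻¹' B) ≤ μ ((X + Y) ⁻¹' C) := by
  rw [← h.measure_inter_preimage_eq_mul A B hA hB]
  exact measure_mono fun ω ⟨hx, hy⟩ => hABC (Set.add_mem_add hx hy)

lemma inv_four_le_measure_sum_mem_Ici_zero [IsProbabilityMeasure μ] {X : ι → Ω → ℝ × ℝ}
    (hindep : iIndepFun X μ) (hmeas : ∀ i, Measurable (X i))
    (h₁ : ∀ i, MeasurePreserving reflectFst (μ.map (X i)) (μ.map (X i)))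
    (h₂ : ∀ i, MeasurePreserving reflectSnd (μ.map (X i)) (μ.map (X i))) (s : Finset ι) :
    4⁻¹ ≤ μ ((∑ i ∈ s, X i) ⁻¹' Ici 0) := by
  have hS : Measurable (∑ i ∈ s, X i) := by fun_prop
  have := Measure.isProbabilityMeasure_map (μ := μ) hS.aemeasurable
  rw [← Measure.map_apply hS measurableSet_Ici]
  exact inv_four_le_measure_Ici_zero _
    (measurePreserving_map_sum_of_iIndepFun hindep hmeas measurable_reflectFst h₁ s)
    (measurePreserving_map_sum_of_iIndepFun hindep hmeas measurable_reflectSnd h₂ s)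

end SumOfIndependent

lemma le_liminf_log_div_of_le {p s : ℕ → ℝ} {a c : ℝ} (hc : 0 < c) (hs : Tendsto s atTop atTop)
    (hp : ∀ᶠ n in atTop, c * exp (-(a * s n)) ≤ p n ∧ p n ≤ 1) :
    -a ≤ liminf (fun n => log (p n) / s n) atTop := by
  have hlim : Tendsto (fun n => -a + log c / s n) atTop (𝓝 (-a)) := by
    simpa using tendsto_const_nhds.add (tendsto_const_nhds.div_atTop hs)
  have hlower : ∀ᶠ n in atTop, -a + log c / s n ≤ log (p n) / s n := by
    filter_upwards [hp, hs.eventually_gt_atTop 0] with n hpn hsn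
    have hlog := log_le_log (by positivity) hpn.1
    rw [log_mul hc.ne' (exp_pos _).ne', log_exp] at hlog
    rw [le_div_iff₀ hsn, add_mul, div_mul_cancel₀ _ hsn.ne']
    linarith
  have hupper : ∀ᶠ n in atTop, log (p n) / s n ≤ 0 := by
    filter_upwards [hp, hs.eventually_gt_atTop 0] with n hpn hsn
    have hp0 : 0 ≤ p n := le_trans (by positivity) hpn.1
    exact div_nonpos_of_nonpos_of_nonneg (log_nonpos hp0 hpn.2) hsn.le
  rw [← hlim.liminf_eq]
  exact liminf_le_liminf hlower hlim.isBoundedUnder_ge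
    (isCoboundedUnder_ge_of_eventually_le _ hupper)

lemma two_lt_rpow_neg_one_div_two {ε : ℝ} (hε : 0 < ε) (hε4 : ε < 1 / 4) :
    2 < ε ^ (-(1 : ℝ) / 2) := by
  have hquarter : (1 / 4 : ℝ) ^ (-(1 : ℝ) / 2) = 2 := by
    rw [show (1 / 4 : ℝ) = 2 ^ (-2 : ℝ) by norm_num, ← rpow_mul zero_le_two]
    norm_num
  calc 2 = (1 / 4 : ℝ) ^ (-(1 : ℝ) / 2) := hquarter.symm
    _ < ε ^ (-(1 : ℝ) / 2) := rpow_lt_rpow_of_neg hε hε4 (by norm_num)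

instance : IsProbabilityMeasure rademacherLaw :=
  ⟨by simp [rademacherLaw, ENNReal.inv_two_add_inv_two]⟩

instance (ε : ℝ) : IsProbabilityMeasure (directionLaw ε) :=
  ⟨by simp [directionLaw, ENNReal.inv_two_add_inv_two]⟩

lemma measurePreserving_neg_rademacherLaw :
    MeasurePreserving Neg.neg rademacherLaw rademacherLaw := by
  refine ⟨measurable_neg, ?_⟩
  rw [rademacherLaw, Measure.map_add _ _ measurable_neg, Measure.map_smul, Measure.map_smul,
    Measure.map_dirac' measurable_neg, Measure.map_dirac' measurable_neg, neg_neg, add_comm]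

def twoJumpMap (p : ℝ × (ℝ × ℝ) × (ℝ × ℝ)) : ℝ × ℝ :=
  (p.1 * p.2.1.1 * p.2.2.1, p.1 * p.2.1.2 * p.2.2.2)

lemma measurable_twoJumpMap : Measurable twoJumpMap := by
  unfold twoJumpMap; fun_prop

section TwoJumpLaw

variable (ε : ℝ) (νR : Measure ℝ) [IsProbabilityMeasure νR]

lemma twoJumpLaw_eq_map :
    twoJumpLaw ε νR =
      (νR.prod ((directionLaw ε).prod (rademacherLaw.prod rademacherLaw))).map twoJumpMap :=
  rfl

lemma measurePreserving_twoJumpLaw_of_signs {L σ : ℝ × ℝ → ℝ × ℝ} (hL : Measurable L)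
    (hσ : MeasurePreserving σ (rademacherLaw.prod rademacherLaw)
      (rademacherLaw.prod rademacherLaw))
    (hLσ : ∀ p, L (twoJumpMap p) = twoJumpMap (p.1, p.2.1, σ p.2.2)) :
    MeasurePreserving L (twoJumpLaw ε νR) (twoJumpLaw ε νR) := by
  have hT := (MeasurePreserving.id νR).prod ((MeasurePreserving.id (directionLaw ε)).prod hσ)
  refine ⟨hL, ?_⟩
  rw [twoJumpLaw_eq_map, Measure.map_map hL measurable_twoJumpMap,
    show L ∘ twoJumpMap = twoJumpMap ∘ Prod.map id (Prod.map id σ) from funext hLσ,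
    ← Measure.map_map measurable_twoJumpMap hT.measurable, hT.map_eq]

lemma measurePreserving_reflectFst_twoJumpLaw :
    MeasurePreserving reflectFst (twoJumpLaw ε νR) (twoJumpLaw ε νR) :=
  measurePreserving_twoJumpLaw_of_signs ε νR measurable_reflectFst
    (measurePreserving_neg_rademacherLaw.prod (MeasurePreserving.id _))
    fun p => by simp [reflectFst, twoJumpMap]

lemma measurePreserving_reflectSnd_twoJumpLaw :
    MeasurePreserving reflectSnd (twoJumpLaw ε νR) (twoJumpLaw ε νR) :=
  measurePreserving_twoJumpLaw_of_signs ε νR measurable_reflectSnd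
    ((MeasurePreserving.id _).prod measurePreserving_neg_rademacherLaw)
    fun p => by simp [reflectSnd, twoJumpMap]

lemma le_twoJumpLaw_of_ray {S : Set (ℝ × ℝ)} (hS : MeasurableSet S) {v : ℝ × ℝ}
    (hdir : 2⁻¹ ≤ directionLaw ε {v}) {a : ℝ} (hv : ∀ r, a ≤ r → (r * v.1, r * v.2) ∈ S) :
    νR (Ici a) * 8⁻¹ ≤ twoJumpLaw ε νR S := by
  have hsign : 2⁻¹ ≤ rademacherLaw {1} := inv_two_le_half_dirac_add_half_dirac_apply _ _
  rw [twoJumpLaw_eq_map, Measure.map_apply measurable_twoJumpMap hS]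
  calc νR (Ici a) * 8⁻¹ = νR (Ici a) * (2⁻¹ * (2⁻¹ * 2⁻¹)) := by
        rw [← ENNReal.mul_inv (by simp) (by simp), ← ENNReal.mul_inv (by simp) (by simp)]
        norm_num
    _ ≤ νR (Ici a) * (directionLaw ε {v} * (rademacherLaw {1} * rademacherLaw {1})) := by
        gcongr
    _ = (νR.prod ((directionLaw ε).prod (rademacherLaw.prod rademacherLaw)))
          (Ici a ×ˢ {v} ×ˢ {1} ×ˢ {1}) := by
        simp only [Measure.prod_prod]
    _ ≤ _ := by
        refine measure_mono ?_
        rintro ⟨r, v', s₁, s₂⟩ ⟨hr, rfl, rfl, rfl⟩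
        simpa [twoJumpMap] using hv r hr

lemma le_twoJumpLaw_Ici_fst (hε : 0 ≤ ε) {a : ℝ} (ha : 0 ≤ a) :
    νR (Ici a) * 8⁻¹ ≤ twoJumpLaw ε νR (Ici (a, 0)) :=
  le_twoJumpLaw_of_ray ε νR measurableSet_Ici (v := (1, ε))
    (inv_two_le_half_dirac_add_half_dirac_apply _ _)
    fun r hr => by simpa using ⟨hr, mul_nonneg (ha.trans hr) hε⟩

lemma le_twoJumpLaw_Ici_snd (hε : 0 ≤ ε) {a : ℝ} (ha : 0 ≤ a) :
    νR (Ici a) * 8⁻¹ ≤ twoJumpLaw ε νR (Ici (0, a)) :=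
  le_twoJumpLaw_of_ray ε νR measurableSet_Ici (v := (ε, 1))
    (by rw [directionLaw, add_comm]; exact inv_two_le_half_dirac_add_half_dirac_apply _ _)
    fun r hr => by simpa using ⟨mul_nonneg (ha.trans hr) hε, hr⟩

end TwoJumpLaw

lemma le_measure_sum_mem_Ici_of_twoJumpLaw {Ω : Type*} [MeasurableSpace Ω] {μ : Measure Ω}
    [IsProbabilityMeasure μ] {ε : ℝ} (hε : 0 ≤ ε) {νR : Measure ℝ} [IsProbabilityMeasure νR]
    {X : ℕ → Ω → ℝ × ℝ} (hmeas : ∀ i, Measurable (X i)) (hindep : iIndepFun X μ)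
    (hident : ∀ i, μ.map (X i) = twoJumpLaw ε νR) {a : ℝ} (ha : 0 ≤ a) {n : ℕ} (hn : 2 ≤ n) :
    νR (Ici a) ^ 2 * 256⁻¹ ≤ μ ((∑ i ∈ Finset.range n, X i) ⁻¹' Ici (a, a)) := by
  set T := ∑ i ∈ Finset.Ico 2 n, X i
  have hsplit₁ : ∑ i ∈ Finset.Ico 1 n, X i = X 1 + T := Finset.sum_eq_sum_Ico_succ_bot (by omega) X
  have hsplit₀ : ∑ i ∈ Finset.range n, X i = X 0 + (X 1 + T) := by
    rw [Finset.range_eq_Ico, Finset.sum_eq_sum_Ico_succ_bot (by omega), hsplit₁]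
  have hindep₀ : IndepFun (X 0) (X 1 + T) μ :=
    hsplit₁ ▸ (hindep.indepFun_finsetSum_of_notMem hmeas (by simp)).symm
  have hindep₁ : IndepFun (X 1) T μ := (hindep.indepFun_finsetSum_of_notMem hmeas (by simp)).symm
  have hjump₀ : νR (Ici a) * 8⁻¹ ≤ μ (X 0 ⁻¹' Ici (a, 0)) := by
    rw [← Measure.map_apply (hmeas 0) measurableSet_Ici, hident]
    exact le_twoJumpLaw_Ici_fst ε νR hε ha
  have hjump₁ : νR (Ici a) * 8⁻¹ ≤ μ (X 1 ⁻¹' Ici (0, a)) := by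
    rw [← Measure.map_apply (hmeas 1) measurableSet_Ici, hident]
    exact le_twoJumpLaw_Ici_snd ε νR hε ha
  have hrest : 4⁻¹ ≤ μ (T ⁻¹' Ici 0) :=
    inv_four_le_measure_sum_mem_Ici_zero hindep hmeas
      (fun i => hident i ▸ measurePreserving_reflectFst_twoJumpLaw ε νR)
      (fun i => hident i ▸ measurePreserving_reflectSnd_twoJumpLaw ε νR) _
  rw [hsplit₀]
  calc νR (Ici a) ^ 2 * 256⁻¹ = νR (Ici a) * 8⁻¹ * (νR (Ici a) * 8⁻¹ * 4⁻¹) := by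
        rw [← mul_assoc, mul_mul_mul_comm, ← sq, mul_assoc, ← ENNReal.mul_inv (by simp) (by simp),
          ← ENNReal.mul_inv (by simp) (by simp)]
        norm_num
    _ ≤ μ (X 0 ⁻¹' Ici (a, 0)) * (μ (X 1 ⁻¹' Ici (0, a)) * μ (T ⁻¹' Ici 0)) := by gcongr
    _ ≤ μ (X 0 ⁻¹' Ici (a, 0)) * μ ((X 1 + T) ⁻¹' Ici (0, a)) := by
      gcongr
      exact hindep₁.mul_le_measure_add_preimage measurableSet_Ici measurableSet_Ici
        ((Set.Ici_add_Ici_subset _ _).trans (by simp))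
    _ ≤ _ := hindep₀.mul_le_measure_add_preimage measurableSet_Ici measurableSet_Ici
        ((Set.Ici_add_Ici_subset _ _).trans (by simp))

/-- In the two-big-jumps example (`R` Weibull(1/2), `V` uniform on
`{(1,ε),(ε,1)}`, Rademacher signs), for i.i.d. copies `X_i` of `X`,
`liminf_N N^{-1/2} log P(N^{-1} ∑ X_i ≥ (1,1)) ≥ -2`; in particular, for `ε < 1/4`
this lower bound `-2` is strictly larger than `-J(1,1) = -ε^{-1/2}`, so the
single-jump rate is not the correct rate for this event. -/
theorem two_big_jumps_lower_bound
    {Ω : Type*} [MeasurableSpace Ω] (μ : Measure Ω) [IsProbabilityMeasure μ]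
    (ε : ℝ) (hε : ε ∈ Set.Ioo (0:ℝ) 1)
    (νR : Measure ℝ) [IsProbabilityMeasure νR]
    (hνR : ∀ t : ℝ, 0 ≤ t → νR (Set.Ici t) = ENNReal.ofReal (Real.exp (-(t ^ ((1:ℝ)/2)))))
    (X : ℕ → Ω → ℝ × ℝ) (hmeas : ∀ i, Measurable (X i))
    (hindep : ProbabilityTheory.iIndepFun X μ)
    (hident : ∀ i, Measure.map (X i) μ = twoJumpLaw ε νR) :
    (-2 : ℝ) ≤ Filter.liminf (fun N : ℕ =>
        Real.log (μ {ω | (N:ℝ) * 1 ≤ (∑ i ∈ Finset.range N, X i ω).1 ∧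
            (N:ℝ) * 1 ≤ (∑ i ∈ Finset.range N, X i ω).2}).toReal
          / (N:ℝ) ^ ((1:ℝ)/2)) atTop ∧
    (ε < 1/4 → -(ε ^ (-(1:ℝ)/2)) < (-2 : ℝ)) := by
  refine ⟨?_, fun hε4 => neg_lt_neg (two_lt_rpow_neg_one_div_two hε.1 hε4)⟩
  refine le_liminf_log_div_of_le (c := 256⁻¹) (by norm_num)
    ((tendsto_rpow_atTop (by norm_num)).comp tendsto_natCast_atTop_atTop) ?_
  filter_upwards [eventually_ge_atTop 2] with N hN
  have hevent : {ω | (N:ℝ) * 1 ≤ (∑ i ∈ Finset.range N, X i ω).1 ∧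
      (N:ℝ) * 1 ≤ (∑ i ∈ Finset.range N, X i ω).2}
        = (∑ i ∈ Finset.range N, X i) ⁻¹' Ici ((N:ℝ), (N:ℝ)) := by
    ext ω; simp [Prod.le_def]
  have hbound := le_measure_sum_mem_Ici_of_twoJumpLaw hε.1.le hmeas hindep hident N.cast_nonneg hN
  rw [hνR _ N.cast_nonneg] at hbound
  rw [hevent]
  refine ⟨le_trans (le_of_eq ?_) (ENNReal.toReal_mono (measure_ne_top _ _) hbound),
    measureReal_le_one⟩
  rw [ENNReal.toReal_mul, ENNReal.toReal_pow, ENNReal.toReal_ofReal (exp_pos _).le,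
    ← exp_nat_mul, mul_neg, mul_comm]
  norm_num
end
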